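/- arXiv:0801.0941 — 3 statements merged into one kernel-verified Lean document; each statement's English description precedes it below -/
import Mathlib

section
/- For d = 1, the triangle function f(x) = max(1 − |x|, 0) is an extremal ray generator of the cone of continuous nonnegative positive definite functions on ℝ. -/
open Complex
open scoped ComplexOrder

/-- A real-valued function on ℝ is positive definite in Bochner's sense. -/
def IsPosDef (f : ℝ → ℝ) : Prop :=
  ∀ (n : ℕ) (x : Fin n → ℝ) (c : Fin n → ℂ),
    0 ≤ ∑ j, ∑ k, c j * (starRingEnd ℂ) (c k) * (f (x j - x k) : ℂ)

/-!
Sample on the grid `ℤ / n`. For a positive definite `p` vanishing outside `(-1, 1)`, the even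
cosine polynomial with coefficients `p (m / n)` is nonnegative: the Toeplitz quadratic form of size
`N` built from these samples grows like `N` times it. For the triangle function this polynomial is
the Fejér kernel `|∑_{j<n} e^{ijθ}|² / n`, which vanishes at `θ = 2πk/n`, `0 < k < n`. If
`triangle = g + h`, the polynomial of `g` is squeezed between `0` and the Fejér kernel, so it
vanishes together with its derivative at these points, and discrete Fourier inversion forces
`g (m / n) = g 0 * (1 - m / n)`. Evenness and continuity extend this to all of `ℝ`.
-/

open scoped Real
open Finset

lemma sum_range_exp_two_pi_mul_div {n : ℕ} (hn : n ≠ 0) (r : ℤ) :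
    ∑ k ∈ range n, Complex.exp (↑(r * (2 * π * k / n)) * I)
      = if (n : ℤ) ∣ r then (n : ℂ) else 0 := by
  have hζ := Complex.isPrimitiveRoot_exp n hn
  have hterm (k : ℕ) :
      Complex.exp (↑(r * (2 * π * k / n)) * I) = (Complex.exp (2 * π * I / n) ^ r) ^ k := by
    rw [← Complex.exp_int_mul, ← Complex.exp_nat_mul]
    congr 1
    push_cast
    ring
  simp only [hterm]
  generalize Complex.exp (2 * π * I / n) = ζ at hζ ⊢
  split_ifs with hdvd
  · simp [(hζ.zpow_eq_one_iff_dvd r).2 hdvd]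
  · have hω : (ζ ^ r) ^ n = 1 := by
      rw [← zpow_natCast, ← zpow_mul, mul_comm, zpow_mul, zpow_natCast, hζ.pow_eq_one,
        one_zpow]
    rw [geom_sum_eq (mt (hζ.zpow_eq_one_iff_dvd r).1 hdvd), hω, sub_self, zero_div]

lemma sum_range_cos_two_pi_mul_div {n : ℕ} (hn : n ≠ 0) (r : ℤ) :
    ∑ k ∈ range n, Real.cos (r * (2 * π * k / n))
      = if (n : ℤ) ∣ r then (n : ℝ) else 0 := by
  have h := congrArg Complex.re (sum_range_exp_two_pi_mul_div hn r)
  rw [Complex.re_sum] at h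
  simp only [Complex.exp_ofReal_mul_I_re] at h
  rw [h]
  split_ifs <;> simp

lemma sum_range_sin_two_pi_mul_div {n : ℕ} (hn : n ≠ 0) (r : ℤ) :
    ∑ k ∈ range n, Real.sin (r * (2 * π * k / n)) = 0 := by
  have h := congrArg Complex.im (sum_range_exp_two_pi_mul_div hn r)
  rw [Complex.im_sum] at h
  simp only [Complex.exp_ofReal_mul_I_im] at h
  rw [h]
  split_ifs <;> simp

lemma natCast_dvd_sub_iff_of_mem_Ico {n j m : ℕ} (hj : j ∈ Ico 1 n) (hm : m ∈ Ico 1 n) :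
    (n : ℤ) ∣ (j - m : ℤ) ↔ j = m := by
  rw [mem_Ico] at hj hm
  refine ⟨fun h => ?_, fun h => by simp [h]⟩
  have := Int.eq_zero_of_dvd_of_natAbs_lt_natAbs h (by omega)
  omega

lemma natCast_dvd_add_iff_of_mem_Ico {n j m : ℕ} (hj : j ∈ Ico 1 n) (hm : m ∈ Ico 1 n) :
    (n : ℤ) ∣ (j + m : ℤ) ↔ j = n - m := by
  rw [mem_Ico] at hj hm
  refine ⟨fun h => ?_, fun h => Dvd.intro 1 (by rw [h]; omega)⟩
  have := Nat.eq_of_dvd_of_lt_two_mul (a := j + m) (by omega) (by exact_mod_cast h)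
    (by omega)
  omega

lemma sum_range_cos_mul_cos {n j m : ℕ} (hj : j ∈ Ico 1 n) (hm : m ∈ Ico 1 n) :
    ∑ k ∈ range n, Real.cos (j * (2 * π * k / n)) * Real.cos (m * (2 * π * k / n))
      = n / 2 * ((if j = m then 1 else 0) + if j = n - m then 1 else 0) := by
  have hn : n ≠ 0 := by rw [mem_Ico] at hm; omega
  have hsplit (x : ℝ) : Real.cos (j * x) * Real.cos (m * x)
      = (Real.cos (((j - m : ℤ) : ℝ) * x) + Real.cos (((j + m : ℤ) : ℝ) * x)) / 2 := by
    push_cast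
    rw [sub_mul, add_mul, Real.cos_sub, Real.cos_add]
    ring
  simp only [hsplit, ← sum_div, sum_add_distrib, sum_range_cos_two_pi_mul_div hn,
    natCast_dvd_sub_iff_of_mem_Ico hj hm, natCast_dvd_add_iff_of_mem_Ico hj hm]
  split_ifs <;> ring

lemma sum_range_sin_mul_sin {n j m : ℕ} (hj : j ∈ Ico 1 n) (hm : m ∈ Ico 1 n) :
    ∑ k ∈ range n, Real.sin (j * (2 * π * k / n)) * Real.sin (m * (2 * π * k / n))
      = n / 2 * ((if j = m then 1 else 0) - if j = n - m then 1 else 0) := by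
  have hn : n ≠ 0 := by rw [mem_Ico] at hm; omega
  have hsplit (x : ℝ) : Real.sin (j * x) * Real.sin (m * x)
      = (Real.cos (((j - m : ℤ) : ℝ) * x) - Real.cos (((j + m : ℤ) : ℝ) * x)) / 2 := by
    push_cast
    rw [sub_mul, add_mul, Real.cos_sub, Real.cos_add]
    ring
  simp only [hsplit, ← sum_div, sum_sub_distrib, sum_range_cos_two_pi_mul_div hn,
    natCast_dvd_sub_iff_of_mem_Ico hj hm, natCast_dvd_add_iff_of_mem_Ico hj hm]
  split_ifs <;> ring

lemma sum_range_cos_natCast_mul {n j : ℕ} (hj : j ∈ Ico 1 n) :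
    ∑ k ∈ range n, Real.cos (j * (2 * π * k / n)) = 0 := by
  rw [mem_Ico] at hj
  have hndvd : ¬ (n : ℤ) ∣ j := by
    rw [Int.natCast_dvd_natCast]
    exact Nat.not_dvd_of_pos_of_lt hj.1 hj.2
  simpa [hndvd] using sum_range_cos_two_pi_mul_div (n := n) (by omega) j

/-- `cosPoly a n θ = ∑_{|m| < n} a |m| e^{imθ}`, the symbol of the even sequence `m ↦ a |m|`
truncated to `|m| < n`. -/
noncomputable def cosPoly (a : ℕ → ℝ) (n : ℕ) (θ : ℝ) : ℝ :=
  a 0 + 2 * ∑ j ∈ Ico 1 n, a j * Real.cos (j * θ)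

lemma cosPoly_add (a b : ℕ → ℝ) (n : ℕ) (θ : ℝ) :
    cosPoly (fun m => a m + b m) n θ = cosPoly a n θ + cosPoly b n θ := by
  simp only [cosPoly, add_mul, sum_add_distrib]
  ring

lemma sum_range_cosPoly (a : ℕ → ℝ) (n : ℕ) :
    ∑ k ∈ range n, cosPoly a n (2 * π * k / n) = n * a 0 := by
  simp only [cosPoly, sum_add_distrib, sum_const, card_range, nsmul_eq_mul, ← mul_sum]
  rw [sum_comm, sum_eq_zero fun j hj => by rw [← mul_sum, sum_range_cos_natCast_mul hj, mul_zero]]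
  ring

lemma sum_range_cosPoly_mul_cos (a : ℕ → ℝ) {n m : ℕ} (hm : m ∈ Ico 1 n) :
    ∑ k ∈ range n, cosPoly a n (2 * π * k / n) * Real.cos (m * (2 * π * k / n))
      = n * (a m + a (n - m)) := by
  have hnm : n - m ∈ Ico 1 n := by rw [mem_Ico] at hm ⊢; omega
  have hexpand (x s c : ℝ) : (x + 2 * s) * c = x * c + 2 * (s * c) := by ring
  simp only [cosPoly, hexpand, sum_mul, sum_add_distrib, ← mul_sum, sum_range_cos_natCast_mul hm]
  rw [sum_comm]
  simp only [mul_assoc (a _), ← mul_sum]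
  rw [sum_congr rfl fun j hj => by rw [sum_range_cos_mul_cos hj hm]]
  simp [mul_add, sum_add_distrib, hm, hnm]
  ring

lemma sum_range_sum_sin_mul_sin (b : ℕ → ℝ) {n m : ℕ} (hm : m ∈ Ico 1 n) :
    ∑ k ∈ range n,
        (∑ j ∈ Ico 1 n, b j * Real.sin (j * (2 * π * k / n))) * Real.sin (m * (2 * π * k / n))
      = n / 2 * (b m - b (n - m)) := by
  have hnm : n - m ∈ Ico 1 n := by rw [mem_Ico] at hm ⊢; omega
  simp only [sum_mul]
  rw [sum_comm]
  simp only [mul_assoc (b _), ← mul_sum]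
  rw [sum_congr rfl fun j hj => by rw [sum_range_sin_mul_sin hj hm]]
  simp [mul_sub, sum_sub_distrib, hm, hnm]
  ring

lemma hasDerivAt_cosPoly (a : ℕ → ℝ) (n : ℕ) (θ : ℝ) :
    HasDerivAt (cosPoly a n) (-2 * ∑ j ∈ Ico 1 n, j * a j * Real.sin (j * θ)) θ := by
  refine HasDerivAt.congr_deriv (((HasDerivAt.fun_sum (u := Ico 1 n) fun (j : ℕ) _ =>
    ((Real.hasDerivAt_cos (j * θ)).comp θ ((hasDerivAt_id θ).const_mul (j : ℝ))).const_mul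
      (a j)).const_mul 2).const_add (a 0)) ?_
  simp only [mul_one, mul_sum]
  exact sum_congr rfl fun j _ => by ring

lemma coeff_eq_of_cosPoly_nonneg {a : ℕ → ℝ} {n : ℕ} (hpos : ∀ θ, 0 ≤ cosPoly a n θ)
    (hzero : ∀ k ∈ Ico 1 n, cosPoly a n (2 * π * k / n) = 0) {m : ℕ} (hm : m ∈ Ico 1 n) :
    n * a m = (n - m) * a 0 := by
  have hn : 0 < n := by rw [mem_Ico] at hm; omega
  have h0n : 0 ∈ range n := mem_range.2 hn
  have hIco (k : ℕ) (hk : k ∈ range n) (hk0 : k ≠ 0) : k ∈ Ico 1 n := by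
    rw [mem_range] at hk; rw [mem_Ico]; omega
  have hcrit (k : ℕ) (hk : k ∈ Ico 1 n) :
      ∑ j ∈ Ico 1 n, j * a j * Real.sin (j * (2 * π * k / n)) = 0 := by
    have hmin : IsLocalMin (cosPoly a n) (2 * π * k / n) :=
      Filter.Eventually.of_forall fun θ => (hzero k hk).trans_le (hpos θ)
    linarith [hmin.hasDerivAt_eq_zero (hasDerivAt_cosPoly a n _)]
  have hat0 : cosPoly a n 0 = n * a 0 := by
    rw [← sum_range_cosPoly, sum_eq_single_of_mem 0 h0n fun k hk hk0 => hzero k (hIco k hk hk0)]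
    simp
  have hsym : n * (a m + a (n - m)) = n * a 0 := by
    rw [← sum_range_cosPoly_mul_cos a hm, ← hat0, sum_eq_single_of_mem 0 h0n
      fun k hk hk0 => by rw [hzero k (hIco k hk hk0), zero_mul]]
    simp
  have hanti : n / 2 * (m * a m - ((n - m : ℕ) : ℝ) * a (n - m)) = 0 := by
    rw [← sum_range_sum_sin_mul_sin (fun j => j * a j) hm]
    refine sum_eq_zero fun k hk => ?_
    rcases eq_or_ne k 0 with rfl | hk0
    · simp
    · rw [hcrit k (hIco k hk hk0), zero_mul]
  rw [Nat.cast_sub (mem_Ico.1 hm).2.le] at hanti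
  have hn' : (n : ℝ) ≠ 0 := by positivity
  have hsym' : a m + a (n - m) = a 0 := mul_left_cancel₀ hn' hsym
  have hanti' : m * a m - (n - m) * a (n - m) = 0 :=
    (mul_eq_zero.1 hanti).resolve_left (by positivity)
  linear_combination hanti' + (n - m) * hsym'

lemma sum_range_apply_natCast_sub (φ : ℤ → ℝ) (N : ℕ) :
    ∑ k ∈ range N, φ (N - k) = ∑ m ∈ Ico 1 (N + 1), φ m := by
  have h := sum_Ico_reflect (fun m : ℕ => φ m) 0 (m := N) (n := N) (by omega)
  simp only [Nat.add_sub_cancel_left, Nat.sub_zero] at h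
  rw [range_eq_Ico, ← h]
  exact sum_congr rfl fun k hk => by rw [Nat.cast_sub (mem_Ico.1 hk).2.le]

lemma sum_range_sum_range_apply_sub_succ {φ : ℤ → ℝ} (hφ : ∀ m, φ (-m) = φ m)
    (N : ℕ) :
    ∑ j ∈ range (N + 1), ∑ k ∈ range (N + 1), φ (j - k)
      = ∑ j ∈ range N, ∑ k ∈ range N, φ (j - k) + φ 0
        + 2 * ∑ m ∈ Ico 1 (N + 1), φ m := by
  have hcol : ∑ j ∈ range N, φ (j - N) = ∑ m ∈ Ico 1 (N + 1), φ m := by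
    rw [← sum_range_apply_natCast_sub]
    exact sum_congr rfl fun j _ => by rw [← hφ, neg_sub]
  simp only [sum_range_succ, sum_add_distrib, hcol, sum_range_apply_natCast_sub, sub_self]
  ring

lemma sum_range_sum_range_apply_sub {φ : ℤ → ℝ} (hφ : ∀ m, φ (-m) = φ m) (N : ℕ) :
    ∑ j ∈ range N, ∑ k ∈ range N, φ (j - k)
      = N * φ 0 + 2 * ∑ m ∈ Ico 1 N, (N - m) * φ m := by
  induction N with
  | zero => simp
  | succ N ih =>
    have hweights : ∑ m ∈ Ico 1 (N + 1), ((N + 1 : ℕ) - (m : ℝ)) * φ m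
        = ∑ m ∈ Ico 1 N, (N - m) * φ m + ∑ m ∈ Ico 1 (N + 1), φ m := by
      rw [sum_subset (Ico_subset_Ico_right N.le_succ) (f := fun m : ℕ => ((N : ℝ) - m) * φ m)
        fun m hm hmN => ?_, ← sum_add_distrib]
      · exact sum_congr rfl fun m _ => by push_cast; ring
      · have : m = N := by simp only [mem_Ico] at hm hmN; omega
        simp [this]
    rw [sum_range_sum_range_apply_sub_succ hφ, ih, hweights]
    push_cast
    ring

lemma nonneg_of_sum_range_sum_range_apply_sub_nonneg {φ : ℤ → ℝ}
    (hφ : ∀ m, φ (-m) = φ m) {n : ℕ} (hsupp : ∀ m : ℕ, n ≤ m → φ m = 0)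
    (hQ : ∀ N, 0 ≤ ∑ j ∈ range N, ∑ k ∈ range N, φ (j - k)) :
    0 ≤ φ 0 + 2 * ∑ m ∈ Ico 1 n, φ m := by
  set s := φ 0 + 2 * ∑ m ∈ Ico 1 n, φ m
  set C := 2 * ∑ m ∈ Ico 1 n, m * φ m
  have hlin (N : ℕ) (hN : n ≤ N) :
      ∑ j ∈ range N, ∑ k ∈ range N, φ (j - k) = N * s - C := by
    rw [sum_range_sum_range_apply_sub hφ,
      ← sum_subset (Ico_subset_Ico_right hN) fun m hm hmn => by
        rw [hsupp m (by simp only [mem_Ico] at hm hmn; omega), mul_zero]]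
    simp only [s, C, sub_mul, sum_sub_distrib, ← mul_sum]
    ring
  by_contra! hs
  obtain ⟨N, hN⟩ := exists_nat_gt (max (n : ℝ) (C / s))
  have hnN : n ≤ N := by exact_mod_cast (le_max_left _ _).trans hN.le
  have hCN : N * s < C := (div_lt_iff_of_neg hs).1 ((le_max_right _ _).trans_lt hN)
  linarith [hQ N, hlin N hnN]

namespace IsPosDef

variable {p : ℝ → ℝ}

lemma apply_neg (hp : IsPosDef p) (x : ℝ) : p (-x) = p x := by
  have h := (Complex.le_def.1 (hp 2 ![0, x] ![1, I])).2
  simp [Fin.sum_univ_two] at h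
  linarith

lemma sum_cos_mul_nonneg (hp : IsPosDef p) (N : ℕ) (x t : Fin N → ℝ) :
    0 ≤ ∑ j, ∑ k, Real.cos (t j - t k) * p (x j - x k) := by
  have h := (Complex.le_def.1 (hp N x fun j => Complex.exp (t j * I))).1
  rw [Complex.zero_re, Complex.re_sum] at h
  refine h.trans_eq (sum_congr rfl fun j _ => ?_)
  rw [Complex.re_sum]
  refine sum_congr rfl fun k _ => ?_
  rw [← Complex.exp_conj, ← Complex.exp_add, map_mul, Complex.conj_ofReal, Complex.conj_I,
    show (t j : ℂ) * I + t k * -I = ↑(t j - t k) * I by push_cast; ring, Complex.re_mul_ofReal,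
    Complex.exp_ofReal_mul_I_re]

lemma cosPoly_nonneg (hp : IsPosDef p) {n : ℕ} (hsupp : ∀ m : ℕ, n ≤ m → p (m / n) = 0)
    (θ : ℝ) :
    0 ≤ cosPoly (fun m => p (m / n)) n θ := by
  set φ : ℤ → ℝ := fun m => p (m / n) * Real.cos (m * θ)
  have hQ (N : ℕ) : 0 ≤ ∑ j ∈ range N, ∑ k ∈ range N, φ (j - k) := by
    have h := hp.sum_cos_mul_nonneg N (fun j => j / n) (fun j => j * θ)
    rw [Fin.sum_univ_eq_sum_range
      (fun j => ∑ k : Fin N, Real.cos (j * θ - k * θ) * p (j / n - k / n))] at h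
    refine h.trans_eq (sum_congr rfl fun j _ => ?_)
    rw [Fin.sum_univ_eq_sum_range (fun k : ℕ => Real.cos (j * θ - k * θ) * p (j / n - k / n))]
    refine sum_congr rfl fun k _ => ?_
    simp only [φ]
    push_cast
    rw [mul_comm, sub_div, sub_mul]
  have h := nonneg_of_sum_range_sum_range_apply_sub_nonneg (φ := φ) (n := n)
    (fun m => by simp only [φ, Int.cast_neg, neg_div, neg_mul, Real.cos_neg, hp.apply_neg])
    (fun m hm => by simp [φ, hsupp m hm]) hQ
  simpa [cosPoly, φ] using h

end IsPosDef

noncomputable def triangle (x : ℝ) : ℝ := max (1 - |x|) 0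

lemma triangle_of_one_le_abs {x : ℝ} (hx : 1 ≤ |x|) : triangle x = 0 :=
  max_eq_right (by linarith)

lemma triangle_natCast_div {m n : ℕ} (hmn : m ≤ n) : triangle (m / n) = 1 - m / n := by
  have hle : (m / n : ℝ) ≤ 1 := div_le_one_of_le₀ (by exact_mod_cast hmn) n.cast_nonneg
  rw [triangle, abs_of_nonneg (by positivity), max_eq_left (by linarith)]

lemma natCast_mul_cosPoly_triangle (n : ℕ) (θ : ℝ) :
    n * cosPoly (fun m => triangle (m / n)) n θ
      = (∑ j ∈ range n, Real.cos (j * θ)) ^ 2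
        + (∑ j ∈ range n, Real.sin (j * θ)) ^ 2 := by
  rcases eq_or_ne n 0 with rfl | hn
  · simp
  have hsq : (∑ j ∈ range n, Real.cos (j * θ)) ^ 2 + (∑ j ∈ range n, Real.sin (j * θ)) ^ 2
      = ∑ j ∈ range n, ∑ k ∈ range n, Real.cos (((j - k : ℤ) : ℝ) * θ) := by
    simp only [sq, sum_mul_sum, ← sum_add_distrib]
    refine sum_congr rfl fun j _ => sum_congr rfl fun k _ => ?_
    push_cast
    rw [sub_mul, Real.cos_sub]
  rw [hsq, sum_range_sum_range_apply_sub (φ := fun m => Real.cos (m * θ))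
    fun m => by rw [Int.cast_neg, neg_mul, Real.cos_neg]]
  simp only [cosPoly, mul_add, mul_sum]
  rw [show (0 : ℕ) / (n : ℝ) = 0 by simp, triangle, abs_zero, sub_zero, max_eq_left zero_le_one]
  push_cast
  congr 1
  · rw [zero_mul, Real.cos_zero, mul_one]
  · refine sum_congr rfl fun m hm => ?_
    rw [triangle_natCast_div (mem_Ico.1 hm).2.le]
    field_simp

lemma cosPoly_triangle_eq_zero {n k : ℕ} (hk : k ∈ Ico 1 n) :
    cosPoly (fun m => triangle (m / n)) n (2 * π * k / n) = 0 := by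
  have hn : n ≠ 0 := by rw [mem_Ico] at hk; omega
  have hcos : ∑ j ∈ range n, Real.cos (j * (2 * π * k / n)) = 0 := by
    rw [← sum_range_cos_natCast_mul hk]
    exact sum_congr rfl fun j _ => by ring_nf
  have hsin : ∑ j ∈ range n, Real.sin (j * (2 * π * k / n)) = 0 := by
    rw [← sum_range_sin_two_pi_mul_div hn k]
    exact sum_congr rfl fun j _ => by push_cast; ring_nf
  have h := natCast_mul_cosPoly_triangle n (2 * π * k / n)
  rw [hcos, hsin] at h
  simpa [hn] using h

lemma IsPosDef.apply_natCast_div_of_add_eq_triangle {g h : ℝ → ℝ} (hg : IsPosDef g)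
    (hh : IsPosDef h) (hg0 : ∀ x, 0 ≤ g x) (hh0 : ∀ x, 0 ≤ h x)
    (hsum : ∀ x, triangle x = g x + h x) {n : ℕ} (hn : 0 < n) (m : ℕ) :
    g (m / n) = g 0 * triangle (m / n) := by
  have hsupp {x : ℝ} (hx : 1 ≤ |x|) : g x = 0 ∧ h x = 0 :=
    (add_eq_zero_iff_of_nonneg (hg0 x) (hh0 x)).1 ((hsum x).symm.trans (triangle_of_one_le_abs hx))
  have hsuppn {m : ℕ} (hm : n ≤ m) : 1 ≤ |(m / n : ℝ)| := by
    rw [abs_of_nonneg (by positivity), one_le_div (by positivity)]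
    exact_mod_cast hm
  rcases Nat.eq_zero_or_pos m with rfl | hm0
  · simp [triangle]
  rcases le_or_gt n m with hnm | hmn
  · rw [(hsupp (hsuppn hnm)).1, triangle_of_one_le_abs (hsuppn hnm), mul_zero]
  have hgpos := hg.cosPoly_nonneg fun m hm => (hsupp (hsuppn hm)).1
  have hhpos := hh.cosPoly_nonneg fun m hm => (hsupp (hsuppn hm)).2
  have hzero (k : ℕ) (hk : k ∈ Ico 1 n) :
      cosPoly (fun m => g (m / n)) n (2 * π * k / n) = 0 := by
    have htri := cosPoly_triangle_eq_zero hk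
    simp only [hsum, cosPoly_add] at htri
    linarith [hgpos (2 * π * k / n), hhpos (2 * π * k / n)]
  have hcoeff := coeff_eq_of_cosPoly_nonneg hgpos hzero (mem_Ico.2 ⟨hm0, hmn⟩)
  rw [Nat.cast_zero, zero_div] at hcoeff
  rw [triangle_natCast_div hmn.le]
  field_simp
  linarith

lemma apply_abs_of_even {f : ℝ → ℝ} (hf : ∀ x, f (-x) = f x) (x : ℝ) : f |x| = f x := by
  rcases abs_cases x with ⟨hx, _⟩ | ⟨hx, _⟩ <;> simp [hx, hf]

lemma eq_of_even_of_eq_natCast_div {f f' : ℝ → ℝ} (hf : Continuous f) (hf' : Continuous f')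
    (hfe : ∀ x, f (-x) = f x) (hfe' : ∀ x, f' (-x) = f' x)
    (h : ∀ m n : ℕ, 0 < n → f (m / n) = f' (m / n)) : f = f' := by
  refine hf.ext_on Rat.denseRange_cast hf' ?_
  rintro _ ⟨q, rfl⟩
  have habs : |(q : ℝ)| = q.num.natAbs / q.den := by
    rw [Rat.cast_def, abs_div, Nat.cast_natAbs, Int.cast_abs, Nat.abs_cast]
  rw [← apply_abs_of_even hfe, ← apply_abs_of_even hfe', habs]
  exact h _ _ q.pos

theorem triangle_extremal :
    ∀ g h : ℝ → ℝ,
      Continuous g → (∀ x, 0 ≤ g x) → IsPosDef g →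
      Continuous h → (∀ x, 0 ≤ h x) → IsPosDef h →
      (∀ x, max (1 - |x|) 0 = g x + h x) →
      ∃ c ∈ Set.Icc (0 : ℝ) 1,
        (∀ x, g x = c * max (1 - |x|) 0) ∧ (∀ x, h x = (1 - c) * max (1 - |x|) 0) := by
  intro g h hg hg0 hgpd _ hh0 hhpd hsum
  have hg_eq : g = fun x => g 0 * triangle x :=
    eq_of_even_of_eq_natCast_div hg (continuous_const.mul (by unfold triangle; fun_prop))
      hgpd.apply_neg (fun x => by simp [triangle])
      fun m n hn => hgpd.apply_natCast_div_of_add_eq_triangle hhpd hg0 hh0 hsum hn m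
  have h0 : g 0 + h 0 = 1 := by simpa using (hsum 0).symm
  refine ⟨g 0, ⟨hg0 0, by linarith [hh0 0]⟩, fun x => congrFun hg_eq x, fun x => ?_⟩
  have hx := hsum x
  rw [hg_eq] at hx
  simp only [triangle] at hx
  linarith
end

section
/- Let P be a real polynomial and λ > 0 such that f(x) = P(x)e^{−πλx²} is nonnegative, positive definite, and its Fourier transform f̂(ξ) = P̃(ξ)e^{−πξ²/λ} is nonnegative with both P and P̃ strictly positive on ℝ (no real zeroes), and deg P ≥ 1. Then f is not an extremal ray generator of the cone of continuous nonnegative positive definite functions on ℝ. -/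
open Complex Polynomial
open scoped ComplexOrder FourierTransform Real

/-!
Since `P` and `P̃` are positive polynomials, they are bounded below by positive constants, so for
a small `c > 0` both `c e^{-πλx²}` and `(P - c) e^{-πλx²}` are nonnegative and have nonnegative
Fourier transforms `(c/√λ) e^{-πξ²/λ}` and `(P̃ - c/√λ) e^{-πξ²/λ}`. A continuous integrable function
with nonnegative integrable Fourier transform is positive definite (the easy half of Bochner's
theorem), so `f` splits into two nonnegative positive definite summands; the first is not a
multiple of `f` because `P` is not constant.
-/

open MeasureTheory ComplexConjugate

lemma Polynomial.exists_pos_le_eval {p : ℝ[X]} (hp : ∀ x, 0 < p.eval x) :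
    ∃ ε > 0, ∀ x, ε ≤ p.eval x := by
  obtain ⟨x₀, hx₀⟩ := p.exists_forall_norm_le
  refine ⟨p.eval x₀, hp x₀, fun x => ?_⟩
  simpa [abs_of_pos (hp _)] using hx₀ x

lemma Polynomial.integrable_eval_mul_exp_neg_mul_sq (p : ℝ[X]) {b : ℝ} (hb : 0 < b) :
    Integrable fun x : ℝ => p.eval x * Real.exp (-(b * x ^ 2)) := by
  simp_rw [p.eval_eq_sum_range, Finset.sum_mul, mul_assoc]
  refine integrable_finsetSum _ fun i _ => Integrable.const_mul ?_ _
  simpa using integrable_rpow_mul_exp_neg_mul_sq hb (s := i) (by linarith [i.cast_nonneg (α := ℝ)])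

section Fourier

variable {V E : Type*} [NormedAddCommGroup V] [InnerProductSpace ℝ V] [FiniteDimensional ℝ V]
  [MeasurableSpace V] [BorelSpace V] [NormedAddCommGroup E] [NormedSpace ℂ E]

lemma Real.fourier_const_smul (r : ℂ) (f : V → E) : 𝓕 (r • f) = r • 𝓕 f :=
  VectorFourier.fourierIntegral_const_smul _ _ _ _ _

lemma Real.fourier_sub {f g : V → E} (hf : Integrable f) (hg : Integrable g) :
    𝓕 (f - g) = 𝓕 f - 𝓕 g := by
  ext w
  simp only [Real.fourier_eq, Pi.sub_apply, smul_sub]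
  exact integral_sub ((Real.fourierIntegral_convergent_iff w).2 hf)
    ((Real.fourierIntegral_convergent_iff w).2 hg)

end Fourier

lemma Real.integrable_fourierChar_mul {φ : ℝ → ℂ} (hφ : Integrable φ) (t : ℝ) :
    Integrable fun ξ : ℝ => (𝐞 (t * ξ) : ℂ) * φ ξ := by
  simpa [Circle.smul_def] using (Real.fourierIntegral_convergent_iff (-t)).2 hφ

lemma Real.fourierInv_eq_integral_mul (φ : ℝ → ℂ) (x : ℝ) :
    𝓕⁻ φ x = ∫ ξ, (𝐞 (x * ξ) : ℂ) * φ ξ := by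
  simp [Real.fourierInv_eq, Circle.smul_def]

lemma sum_sum_mul_conj_mul_fourierChar_sub {n : ℕ} (c : Fin n → ℂ) (x : Fin n → ℝ) (ξ : ℝ) :
    ∑ j, ∑ k, c j * conj (c k) * (𝐞 ((x j - x k) * ξ) : ℂ) =
      normSq (∑ j, c j * 𝐞 (x j * ξ)) := by
  rw [← mul_conj, map_sum, Finset.sum_mul_sum]
  refine Finset.sum_congr rfl fun j _ => Finset.sum_congr rfl fun k _ => ?_
  rw [sub_mul, AddChar.map_sub_eq_div, Circle.coe_div, div_eq_mul_inv, ← Circle.coe_inv,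
    Circle.coe_inv_eq_conj, map_mul (starRingEnd ℂ)]
  ring

lemma isPosDef_of_eq_fourierInv {w : ℝ → ℝ} {φ : ℝ → ℂ} (hφ : Integrable φ)
    (hφ_nonneg : ∀ ξ, 0 ≤ φ ξ) (hw : ∀ x, (w x : ℂ) = 𝓕⁻ φ x) : IsPosDef w := by
  intro n x c
  have hint (j k : Fin n) :
      Integrable fun ξ => c j * conj (c k) * 𝐞 ((x j - x k) * ξ) * φ ξ := by
    simpa only [mul_assoc] using
      (Real.integrable_fourierChar_mul hφ (x j - x k)).const_mul (c j * conj (c k))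
  calc (0 : ℂ) ≤ ∫ ξ, (normSq (∑ j, c j * 𝐞 (x j * ξ)) : ℂ) * φ ξ :=
        integral_nonneg fun ξ => mul_nonneg (zero_le_real.2 (normSq_nonneg _)) (hφ_nonneg ξ)
    _ = ∑ j, ∑ k, ∫ ξ, c j * conj (c k) * 𝐞 ((x j - x k) * ξ) * φ ξ := by
        simp_rw [← sum_sum_mul_conj_mul_fourierChar_sub, Finset.sum_mul]
        rw [integral_finsetSum _ fun j _ => integrable_finsetSum _ fun k _ => hint j k]
        exact Finset.sum_congr rfl fun j _ => integral_finsetSum _ fun k _ => hint j k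
    _ = ∑ j, ∑ k, c j * conj (c k) * (w (x j - x k) : ℂ) := by
        simp_rw [hw, Real.fourierInv_eq_integral_mul, ← integral_const_mul, mul_assoc]

lemma isPosDef_of_fourier_nonneg {w : ℝ → ℝ} (hw : Continuous w) (hwi : Integrable w)
    (hFi : Integrable (𝓕 fun x => (w x : ℂ))) (hF : ∀ ξ, 0 ≤ 𝓕 (fun x => (w x : ℂ)) ξ) :
    IsPosDef w :=
  isPosDef_of_eq_fourierInv hFi hF fun x =>
    (congrFun ((continuous_ofReal.comp hw).fourierInv_fourier_eq hwi.ofReal hFi) x).symm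

noncomputable def polyGaussian (lam : ℝ) (p : ℝ[X]) (x : ℝ) : ℝ :=
  p.eval x * Real.exp (-(π * lam * x ^ 2))

section polyGaussian

variable {lam : ℝ} {p q : ℝ[X]}

lemma continuous_polyGaussian (lam : ℝ) (p : ℝ[X]) : Continuous (polyGaussian lam p) := by
  unfold polyGaussian; fun_prop

lemma integrable_polyGaussian (hlam : 0 < lam) (p : ℝ[X]) : Integrable (polyGaussian lam p) :=
  p.integrable_eval_mul_exp_neg_mul_sq (by positivity)

lemma polyGaussian_nonneg (hp : ∀ x, 0 ≤ p.eval x) (x : ℝ) : 0 ≤ polyGaussian lam p x :=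
  mul_nonneg (hp x) (Real.exp_pos _).le

lemma polyGaussian_inv_apply (lam : ℝ) (p : ℝ[X]) (ξ : ℝ) :
    polyGaussian lam⁻¹ p ξ = p.eval ξ * Real.exp (-(π * ξ ^ 2 / lam)) := by
  rw [polyGaussian, div_eq_mul_inv, mul_right_comm]

lemma polyGaussian_sub (lam : ℝ) (p q : ℝ[X]) :
    polyGaussian lam (p - q) = polyGaussian lam p - polyGaussian lam q := by
  ext x; simp [polyGaussian, sub_mul]

lemma fourier_polyGaussian_C (hlam : 0 < lam) (c : ℝ) :
    𝓕 (fun x => (polyGaussian lam (C c) x : ℂ)) =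
      fun ξ => (polyGaussian lam⁻¹ (C (c / √lam)) ξ : ℂ) := by
  have hsmul : (fun x => (polyGaussian lam (C c) x : ℂ)) =
      (c : ℂ) • fun x : ℝ => cexp (-π * lam * x ^ 2) := by
    ext x; simp [polyGaussian]
  have hsqrt : ((√lam : ℝ) : ℂ) = (lam : ℂ) ^ (1 / 2 : ℂ) := by
    rw [Real.sqrt_eq_rpow, ofReal_cpow hlam.le]; norm_num
  rw [hsmul, Real.fourier_const_smul, fourier_gaussian_pi (by simpa using hlam)]
  ext ξ
  simp only [polyGaussian, eval_C, Pi.smul_apply, smul_eq_mul, ← hsqrt]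
  push_cast
  ring_nf

lemma fourier_polyGaussian_sub {p' q' : ℝ[X]} (hlam : 0 < lam)
    (hp : 𝓕 (fun x => (polyGaussian lam p x : ℂ)) = fun ξ => (polyGaussian lam⁻¹ p' ξ : ℂ))
    (hq : 𝓕 (fun x => (polyGaussian lam q x : ℂ)) = fun ξ => (polyGaussian lam⁻¹ q' ξ : ℂ)) :
    𝓕 (fun x => (polyGaussian lam (p - q) x : ℂ)) =
      fun ξ => (polyGaussian lam⁻¹ (p' - q') ξ : ℂ) := by
  have h := Real.fourier_sub (V := ℝ) (E := ℂ) (integrable_polyGaussian hlam p).ofReal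
    (integrable_polyGaussian hlam q).ofReal
  simp only [polyGaussian_sub, Pi.sub_apply, ofReal_sub]
  exact h.trans (congrArg₂ (· - ·) hp hq)

lemma isPosDef_polyGaussian (hlam : 0 < lam) (hq : ∀ ξ, 0 ≤ q.eval ξ)
    (hpq : 𝓕 (fun x => (polyGaussian lam p x : ℂ)) = fun ξ => (polyGaussian lam⁻¹ q ξ : ℂ)) :
    IsPosDef (polyGaussian lam p) := by
  refine isPosDef_of_fourier_nonneg (continuous_polyGaussian lam p)
    (integrable_polyGaussian hlam p) ?_ fun ξ => ?_ <;> rw [hpq]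
  · exact (integrable_polyGaussian (inv_pos.2 hlam) q).ofReal
  · exact zero_le_real.2 (polyGaussian_nonneg hq ξ)

lemma natDegree_eq_zero_of_polyGaussian_C_eq {c a : ℝ} (hc : c ≠ 0)
    (h : polyGaussian lam (C c) = fun x => a * polyGaussian lam p x) : p.natDegree = 0 := by
  have hpoly : C c = C a * p := Polynomial.funext fun x => by
    simpa using mul_right_cancel₀ (Real.exp_pos (-(π * lam * x ^ 2))).ne'
      ((congrFun h x).trans (mul_assoc _ _ _).symm)
  have ha : a ≠ 0 := by rintro rfl; simp [hc] at hpoly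
  rw [← natDegree_C_mul ha, ← hpoly, natDegree_C]

end polyGaussian

theorem hermite_no_real_zeroes_not_extremal_general (lam : ℝ) (hlam : 0 < lam)
    (P Ptilde : Polynomial ℝ) (hP_deg : 1 ≤ P.natDegree)
    (hP_pos : ∀ x : ℝ, 0 < P.eval x)
    (hPt_pos : ∀ ξ : ℝ, 0 < Ptilde.eval ξ)
    (hf_hat : ∀ ξ : ℝ,
      𝓕 (fun x : ℝ => ((P.eval x * Real.exp (-(π * lam * x ^ 2)) : ℝ) : ℂ)) ξ =
        ((Ptilde.eval ξ * Real.exp (-(π * ξ ^ 2 / lam)) : ℝ) : ℂ)) :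
    ∃ g h : ℝ → ℝ,
      Continuous g ∧ (∀ x, 0 ≤ g x) ∧ IsPosDef g ∧
      Continuous h ∧ (∀ x, 0 ≤ h x) ∧ IsPosDef h ∧
      (∀ x, P.eval x * Real.exp (-(π * lam * x ^ 2)) = g x + h x) ∧
      ∀ c : ℝ, g ≠ fun x => c * (P.eval x * Real.exp (-(π * lam * x ^ 2))) := by
  obtain ⟨ε, hε, hεP⟩ := P.exists_pos_le_eval hP_pos
  obtain ⟨ε', hε', hε'Pt⟩ := Ptilde.exists_pos_le_eval hPt_pos
  set c := min ε (ε' * √lam)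
  have hc : 0 < c := lt_min hε (by positivity)
  have hcP (x : ℝ) : c ≤ P.eval x := (min_le_left _ _).trans (hεP x)
  have hcPt (ξ : ℝ) : c / √lam ≤ Ptilde.eval ξ :=
    ((div_le_iff₀ (by positivity)).2 (min_le_right _ _)).trans (hε'Pt ξ)
  have hf : 𝓕 (fun x => (polyGaussian lam P x : ℂ)) =
      fun ξ => (polyGaussian lam⁻¹ Ptilde ξ : ℂ) := by
    ext ξ
    rw [polyGaussian_inv_apply]
    exact hf_hat ξ
  have hg := fourier_polyGaussian_C hlam c
  refine ⟨polyGaussian lam (C c), polyGaussian lam (P - C c),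
    continuous_polyGaussian _ _, polyGaussian_nonneg (by simpa using hc.le),
    isPosDef_polyGaussian hlam (fun _ => by rw [eval_C]; positivity) hg,
    continuous_polyGaussian _ _, polyGaussian_nonneg (by simpa using hcP),
    isPosDef_polyGaussian hlam (by simpa using hcPt) (fourier_polyGaussian_sub hlam hf hg),
    fun x => by simp [polyGaussian, sub_mul], fun a ha => ?_⟩
  have := natDegree_eq_zero_of_polyGaussian_C_eq hc.ne' ha
  omega

theorem hermite_no_real_zeroes_not_extremal (lam : ℝ) (hlam : 0 < lam)
    (P Ptilde : Polynomial ℝ) (hP_deg : 1 ≤ P.natDegree)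
    (hP_pos : ∀ x : ℝ, 0 < P.eval x)
    (hPt_pos : ∀ ξ : ℝ, 0 < Ptilde.eval ξ)
    (hf_pd : IsPosDef (fun x => P.eval x * Real.exp (-(π * lam * x ^ 2))))
    (hf_hat : ∀ ξ : ℝ,
      𝓕 (fun x : ℝ => ((P.eval x * Real.exp (-(π * lam * x ^ 2)) : ℝ) : ℂ)) ξ =
        ((Ptilde.eval ξ * Real.exp (-(π * ξ ^ 2 / lam)) : ℝ) : ℂ)) :
    ∃ g h : ℝ → ℝ,
      Continuous g ∧ (∀ x, 0 ≤ g x) ∧ IsPosDef g ∧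
      Continuous h ∧ (∀ x, 0 ≤ h x) ∧ IsPosDef h ∧
      (∀ x, P.eval x * Real.exp (-(π * lam * x ^ 2)) = g x + h x) ∧
      ∀ c : ℝ, g ≠ fun x => c * (P.eval x * Real.exp (-(π * lam * x ^ 2))) :=
  hermite_no_real_zeroes_not_extremal_general lam hlam P Ptilde hP_deg hP_pos hPt_pos hf_hat
end

section
/- Let f : ℝ → ℝ be an even continuous function that is convex and non-increasing on [0,∞) with f(x) → 0 as x → ∞ (a Pólya-type function). Then f can be written as f(x) = ∫₀^∞ (1 − |x|/t)₊ dν(t) for some positive bounded measure ν on (0,∞), and consequently f is nonnegative and positive definite. -/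
open Complex MeasureTheory
open scoped ComplexOrder

/-!
The right tangent line of `f` at `t > 0` meets the vertical axis at `f t - t f'₊(t)`. By
convexity this intercept decreases in `t`; it lies between `f t` and the intercept
`2 f (t/2) - f t` of a chord, so it tends to `f 0` as `t → 0⁺` and to `0` as `t → ∞`. It is
therefore the tail `ν (t, ∞)` of a finite measure `ν` on `(0, ∞)`. For `x > 0`, writing
`(1 - x/t)₊ = ∫_x^t x/s² ds` and applying Tonelli gives
`∫ (1 - x/t)₊ dν(t) = ∫_x^∞ x/s² ν (s, ∞) ds`, whose integrand is the right derivative of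
`-x f(s)/s`; as this tends to `0` at infinity, the integral is `f x`.

Each triangle `(1 - |u|/t)₊` is positive definite because `t (1 - |a - b|/t)₊` is the length
of `[a, a + t] ∩ [b, b + t]`, a Gram kernel in `L²(ℝ)`, and positive definiteness survives
mixtures.
-/

open Set Filter Topology
open scoped ENNReal

lemma AntitoneOn.le_of_tendsto_atTop {g : ℝ → ℝ} {a l t : ℝ} (hg : AntitoneOn g (Ici a))
    (hlim : Tendsto g atTop (𝓝 l)) (ht : a ≤ t) : l ≤ g t :=
  le_of_tendsto hlim <| by
    filter_upwards [eventually_ge_atTop t] with s hs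
    exact hg ht (ht.trans hs) hs

theorem integral_Ioi_of_hasDerivWithinAt_Ioi_of_tendsto {E : Type*} [NormedAddCommGroup E]
    [NormedSpace ℝ E] [CompleteSpace E] {F F' : ℝ → E} {a : ℝ} {m : E}
    (hcont : ContinuousOn F (Ici a)) (hderiv : ∀ s ∈ Ioi a, HasDerivWithinAt F (F' s) (Ioi s) s)
    (hint : IntegrableOn F' (Ioi a)) (hlim : Tendsto F atTop (𝓝 m)) :
    ∫ s in Ioi a, F' s = m - F a := by
  refine tendsto_nhds_unique (intervalIntegral_tendsto_integral_Ioi a hint tendsto_id) ?_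
  refine (hlim.sub_const (F a)).congr' ?_
  filter_upwards [eventually_ge_atTop a] with b hab
  exact (intervalIntegral.integral_eq_sub_of_hasDeriv_right_of_le hab
    (hcont.mono Icc_subset_Ici_self) (fun s hs ↦ hderiv s hs.1)
    ((intervalIntegrable_iff_integrableOn_Ioc_of_le hab).2
      (hint.mono_set Ioc_subset_Ioi_self))).symm

lemma lintegral_Ioo_ofReal_div_sq {x t : ℝ} (hx : 0 < x) (hxt : x < t) :
    ∫⁻ s in Ioo x t, ENNReal.ofReal (x / s ^ 2) = ENNReal.ofReal (1 - x / t) := by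
  have hpos : ∀ s ∈ uIcc x t, 0 < s := fun s hs ↦ hx.trans_le (uIcc_of_le hxt.le ▸ hs).1
  have hderiv : ∀ s ∈ uIcc x t, HasDerivAt (fun u ↦ -x * u⁻¹) (x / s ^ 2) s := fun s hs ↦
    ((hasDerivAt_inv (hpos s hs).ne').const_mul (-x)).congr_deriv (by ring)
  have hcont : ContinuousOn (fun s : ℝ ↦ x / s ^ 2) (uIcc x t) :=
    continuousOn_const.div (continuousOn_pow 2) fun s hs ↦ (pow_pos (hpos s hs) 2).ne'
  have hint : ∫ s in x..t, x / s ^ 2 = 1 - x / t := by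
    rw [intervalIntegral.integral_eq_sub_of_hasDerivAt hderiv hcont.intervalIntegrable]
    field_simp
    ring
  rw [setLIntegral_congr Ioo_ae_eq_Ioc, ← ofReal_integral_eq_lintegral_ofReal,
    ← intervalIntegral.integral_of_le hxt.le, hint]
  · exact (intervalIntegrable_iff_integrableOn_Ioc_of_le hxt.le).1 hcont.intervalIntegrable
  · filter_upwards [ae_restrict_mem measurableSet_Ioc] with s _
    positivity

lemma lintegral_ofReal_max_one_sub_div (ν : Measure ℝ) [SFinite ν] (hν : ν (Iic 0) = 0) {x : ℝ}
    (hx : 0 < x) :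
    ∫⁻ t, ENNReal.ofReal (max (1 - x / t) 0) ∂ν =
      ∫⁻ s in Ioi x, ENNReal.ofReal (x / s ^ 2) * ν (Ioi s) := by
  set k : ℝ → ℝ≥0∞ := fun s ↦ ENNReal.ofReal (x / s ^ 2)
  have hk : Measurable k := by fun_prop
  have hpos : ∀ᵐ t ∂ν, 0 < t := (measure_eq_zero_iff_ae_notMem.1 hν).mono fun t ht ↦ not_le.1 ht
  calc ∫⁻ t, ENNReal.ofReal (max (1 - x / t) 0) ∂ν
      = ∫⁻ t in Ioi x, ENNReal.ofReal (1 - x / t) ∂ν := by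
        rw [← lintegral_indicator measurableSet_Ioi]
        refine lintegral_congr_ae (hpos.mono fun t ht ↦ ?_)
        by_cases hxt : x < t
        · simp [indicator, hxt]
        · have : 1 ≤ x / t := (one_le_div ht).2 (not_lt.1 hxt)
          simp [indicator, hxt, this]
    _ = ∫⁻ t in Ioi x, ∫⁻ s in Ioi x, (Iio t).indicator k s ∂volume ∂ν := by
        refine setLIntegral_congr_fun measurableSet_Ioi fun t ht ↦ ?_
        rw [lintegral_indicator measurableSet_Iio, Measure.restrict_restrict measurableSet_Iio,
          Iio_inter_Ioi, lintegral_Ioo_ofReal_div_sq hx ht]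
    _ = ∫⁻ s in Ioi x, ∫⁻ t in Ioi x, (Iio t).indicator k s ∂ν ∂volume :=
        lintegral_lintegral_swap ((hk.comp measurable_snd).indicator
          (measurableSet_lt measurable_snd measurable_fst)).aemeasurable
    _ = ∫⁻ s in Ioi x, k s * ν (Ioi s) := by
        refine setLIntegral_congr_fun measurableSet_Ioi fun s hs ↦ ?_
        have hind : ∀ t, (Iio t).indicator k s = (Ioi s).indicator (fun _ ↦ k s) t := by
          intro t
          simp [indicator]
        rw [lintegral_congr hind, lintegral_indicator_const measurableSet_Ioi,
          Measure.restrict_apply measurableSet_Ioi, Ioi_inter_Ioi, max_eq_left hs.le, mul_comm]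

namespace ConvexOn

variable {S : Set ℝ} {f : ℝ → ℝ} {s t x : ℝ}

theorem continuousWithinAt_rightDeriv (hf : ConvexOn ℝ S f) (hx : x ∈ interior S) :
    ContinuousWithinAt (fun y ↦ derivWithin f (Ioi y) y) (Ici x) x := by
  rw [← continuousWithinAt_Ioi_iff_Ici]
  obtain ⟨b, hxb, hbS⟩ := mem_nhdsGE_iff_exists_Ico_subset.1
    (mem_nhdsWithin_of_mem_nhds (isOpen_interior.mem_nhds hx))
  refine tendsto_order.2 ⟨fun a ha ↦ ?_, fun a ha ↦ ?_⟩
  · filter_upwards [Ioo_mem_nhdsGT hxb] with s hs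
    exact ha.trans_le (hf.monotoneOn_rightDeriv hx (hbS ⟨hs.1.le, hs.2⟩) hs.1.le)
  -- Pick a secant with `slope f x y < a`. By continuity of `f`, also `slope f s y < a` for `s`
  -- close to `x`, and this secant bounds the right derivative at `s`.
  have hslope := (hasDerivWithinAt_iff_tendsto_slope' self_notMem_Ioi).mp
    (hf.hasDerivWithinAt_rightDeriv_of_mem_interior hx)
  obtain ⟨y, hya, hxy, hyb⟩ :=
    ((hslope.eventually (gt_mem_nhds ha)).and (Ioo_mem_nhdsGT hxb)).exists
  have hcont : ContinuousAt (fun s ↦ slope f y s) x := by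
    simp only [slope_def_field]
    exact ((hf.continuousOn_interior.continuousAt (isOpen_interior.mem_nhds hx)).sub
      continuousAt_const).div (continuousAt_id.sub continuousAt_const) (sub_ne_zero.2 hxy.ne)
  rw [slope_comm] at hya
  filter_upwards [nhdsWithin_le_nhds (hcont.eventually (gt_mem_nhds hya)),
    Ioo_mem_nhdsGT hxy] with s hsa hs
  calc derivWithin f (Ioi s) s ≤ slope f s y :=
        hf.rightDeriv_le_slope_of_mem_interior (hbS ⟨hs.1.le, hs.2.trans hyb⟩)
          (interior_subset (hbS ⟨hxy.le, hyb⟩)) hs.2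
    _ < a := by rwa [slope_comm]

lemma slope_le_rightDeriv_of_mem_interior (hf : ConvexOn ℝ S f) (hs : s ∈ S)
    (ht : t ∈ interior S) (hst : s < t) : slope f s t ≤ derivWithin f (Ioi t) t :=
  (hf.slope_le_leftDeriv_of_mem_interior hs ht hst).trans
    (hf.leftDeriv_le_rightDeriv_of_mem_interior ht)

end ConvexOn

noncomputable def tangentIntercept (f : ℝ → ℝ) (t : ℝ) : ℝ :=
  f t - t * derivWithin f (Ioi t) t

@[simp]
lemma tangentIntercept_zero (f : ℝ → ℝ) : tangentIntercept f 0 = f 0 := by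
  simp [tangentIntercept]

namespace ConvexOn

variable {f : ℝ → ℝ} {s t x : ℝ}

lemma antitoneOn_tangentIntercept (hf : ConvexOn ℝ (Ici 0) f) :
    AntitoneOn (tangentIntercept f) (Ici 0) := by
  intro s hs t ht hst
  rcases hst.eq_or_lt with rfl | hst
  · rfl
  -- the decrease is `(f s - f t + (t - s) f'₊(t)) + s (f'₊(t) - f'₊(s))`, a sum of two terms `≥ 0`
  have hslope := hf.slope_le_rightDeriv_of_mem_interior hs (by simpa using hs.trans_lt hst) hst
  rw [slope_def_field, div_le_iff₀ (sub_pos.2 hst)] at hslope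
  have hderiv : s * derivWithin f (Ioi s) s ≤ s * derivWithin f (Ioi t) t := by
    rcases (mem_Ici.1 hs).eq_or_lt with rfl | hs
    · simp
    · have hmem : ∀ u : ℝ, 0 < u → u ∈ interior (Ici 0) := by simp
      exact mul_le_mul_of_nonneg_left
        (hf.monotoneOn_rightDeriv (hmem s hs) (hmem t (hs.trans hst)) hst.le) hs.le
  simp only [tangentIntercept]
  nlinarith

lemma tangentIntercept_le (hf : ConvexOn ℝ (Ici 0) f) (ht : 0 < t) :
    tangentIntercept f t ≤ 2 * f (t / 2) - f t := by
  have hslope := hf.slope_le_rightDeriv_of_mem_interior (half_pos ht).le (by simpa using ht)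
    (half_lt_self ht)
  rw [slope_def_field, div_le_iff₀ (by linarith)] at hslope
  simp only [tangentIntercept]
  linarith

lemma le_tangentIntercept (hf : ConvexOn ℝ (Ici 0) f) (hmono : AntitoneOn f (Ici 0))
    (ht : 0 < t) : f t ≤ tangentIntercept f t := by
  have hderiv : derivWithin f (Ioi t) t ≤ 0 := by
    refine (hf.rightDeriv_le_slope_of_mem_interior (by simpa using ht)
      (by simp; linarith : t + 1 ∈ Ici 0) (lt_add_one t)).trans ?_
    rw [slope_def_field]
    exact div_nonpos_of_nonpos_of_nonneg
      (sub_nonpos.2 (hmono ht.le (by simp; linarith) (by linarith))) (by linarith)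
  simp only [tangentIntercept]
  nlinarith

lemma tendsto_tangentIntercept_nhdsGT_zero (hf : ConvexOn ℝ (Ici 0) f)
    (hmono : AntitoneOn f (Ici 0)) (hcont : ContinuousWithinAt f (Ici 0) 0) :
    Tendsto (tangentIntercept f) (𝓝[>] 0) (𝓝 (f 0)) := by
  have hf0 : Tendsto f (𝓝[>] 0) (𝓝 (f 0)) :=
    hcont.mono_left (nhdsWithin_mono _ Ioi_subset_Ici_self)
  have hhalf : Tendsto (fun t : ℝ ↦ f (t / 2)) (𝓝[>] 0) (𝓝 (f 0)) := by
    refine hf0.comp ?_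
    simpa using (continuous_id.div_const (2 : ℝ)).continuousWithinAt.tendsto_nhdsWithin
      (x := 0) (s := Ioi 0) (t := Ioi 0) fun _ ht ↦ half_pos ht
  have hupper := (hhalf.const_mul 2).sub hf0
  rw [two_mul, add_sub_cancel_right] at hupper
  refine tendsto_of_tendsto_of_tendsto_of_le_of_le' hf0 hupper ?_ ?_
  · filter_upwards [self_mem_nhdsWithin] with t ht using hf.le_tangentIntercept hmono ht
  · filter_upwards [self_mem_nhdsWithin] with t ht using hf.tangentIntercept_le ht

lemma tendsto_tangentIntercept_atTop (hf : ConvexOn ℝ (Ici 0) f)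
    (hmono : AntitoneOn f (Ici 0)) (hlim : Tendsto f atTop (𝓝 0)) :
    Tendsto (tangentIntercept f) atTop (𝓝 0) := by
  have hhalf := hlim.comp (tendsto_id.atTop_div_const two_pos)
  have hupper := (hhalf.const_mul 2).sub hlim
  rw [mul_zero, sub_zero] at hupper
  refine tendsto_of_tendsto_of_tendsto_of_le_of_le' hlim hupper ?_ ?_
  · filter_upwards [eventually_gt_atTop 0] with t ht using hf.le_tangentIntercept hmono ht
  · filter_upwards [eventually_gt_atTop 0] with t ht using hf.tangentIntercept_le ht

lemma tangentIntercept_nonneg (hf : ConvexOn ℝ (Ici 0) f) (hmono : AntitoneOn f (Ici 0))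
    (hlim : Tendsto f atTop (𝓝 0)) (ht : 0 ≤ t) : 0 ≤ tangentIntercept f t :=
  hf.antitoneOn_tangentIntercept.le_of_tendsto_atTop (hf.tendsto_tangentIntercept_atTop hmono hlim)
    ht

lemma continuousWithinAt_tangentIntercept (hf : ConvexOn ℝ (Ici 0) f)
    (hmono : AntitoneOn f (Ici 0)) (hcont : ContinuousWithinAt f (Ici 0) 0) (ht : 0 ≤ t) :
    ContinuousWithinAt (tangentIntercept f) (Ici t) t := by
  rcases ht.eq_or_lt with rfl | ht
  · rw [← continuousWithinAt_Ioi_iff_Ici, ContinuousWithinAt, tangentIntercept_zero]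
    exact hf.tendsto_tangentIntercept_nhdsGT_zero hmono hcont
  · have hint : t ∈ interior (Ici (0 : ℝ)) := by simpa using ht
    exact (hf.continuousOn_interior.continuousAt
      (isOpen_interior.mem_nhds hint)).continuousWithinAt.sub
      (continuousWithinAt_id.mul (hf.continuousWithinAt_rightDeriv hint))

lemma integrableOn_div_sq_mul_tangentIntercept (hf : ConvexOn ℝ (Ici 0) f)
    (hmono : AntitoneOn f (Ici 0)) (hlim : Tendsto f atTop (𝓝 0)) (hx : 0 < x) :
    IntegrableOn (fun s ↦ x / s ^ 2 * tangentIntercept f s) (Ioi x) := by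
  have hmeas : AEStronglyMeasurable (tangentIntercept f) (volume.restrict (Ioi x)) :=
    ((hf.continuousOn_interior.mono fun s (hs : x < s) ↦ by simpa using hx.trans hs)
      |>.aestronglyMeasurable measurableSet_Ioi).sub
      (measurable_id.mul (measurable_derivWithin_Ioi f)).aestronglyMeasurable
  refine ((integrableOn_Ioi_rpow_of_lt (by norm_num : (-2 : ℝ) < -1) hx).const_mul
    (x * f 0)).mono' ((by fun_prop : Measurable fun s : ℝ ↦ x / s ^ 2).aestronglyMeasurable.mul
    hmeas) ?_
  filter_upwards [ae_restrict_mem measurableSet_Ioi] with s (hs : x < s)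
  have hs0 : 0 < s := hx.trans hs
  have h0 := hf.tangentIntercept_nonneg hmono hlim hs0.le
  have h1 : tangentIntercept f s ≤ f 0 := by
    simpa using hf.antitoneOn_tangentIntercept self_mem_Ici hs0.le hs0.le
  rw [Real.norm_of_nonneg (by positivity), Real.rpow_neg hs0.le, Real.rpow_two,
    div_mul_eq_mul_div, mul_comm (x * f 0), ← div_eq_inv_mul]
  gcongr

lemma integral_Ioi_div_sq_mul_tangentIntercept (hf : ConvexOn ℝ (Ici 0) f)
    (hmono : AntitoneOn f (Ici 0)) (hlim : Tendsto f atTop (𝓝 0)) (hx : 0 < x) :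
    ∫ s in Ioi x, x / s ^ 2 * tangentIntercept f s = f x := by
  have hint : ∀ s : ℝ, 0 < s → s ∈ interior (Ici 0) := by simp
  have hFcont : ContinuousOn (fun u ↦ -x * f u / u) (Ici x) :=
    (continuousOn_const.mul (hf.continuousOn_interior.mono fun s hs ↦
      hint s (hx.trans_le hs))).div continuousOn_id fun s hs ↦ (hx.trans_le hs).ne'
  have hderiv : ∀ s ∈ Ioi x,
      HasDerivWithinAt (fun u ↦ -x * f u / u) (x / s ^ 2 * tangentIntercept f s) (Ioi s) s := by
    intro s hs
    have hs0 : 0 < s := hx.trans hs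
    refine (((hf.hasDerivWithinAt_rightDeriv_of_mem_interior (hint s hs0)).const_mul (-x)).div
      (hasDerivWithinAt_id s _) hs0.ne').congr_deriv ?_
    simp only [tangentIntercept, id]
    field_simp
    ring
  have hFlim : Tendsto (fun u ↦ -x * f u / u) atTop (𝓝 0) := by
    simpa only [mul_div_assoc, mul_zero, id] using (hlim.div_atTop tendsto_id).const_mul (-x)
  rw [integral_Ioi_of_hasDerivWithinAt_Ioi_of_tendsto hFcont hderiv
    (hf.integrableOn_div_sq_mul_tangentIntercept hmono hlim hx) hFlim]
  field_simp
  ring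

noncomputable def polyaStieltjes (hf : ConvexOn ℝ (Ici 0) f) (hmono : AntitoneOn f (Ici 0))
    (hcont : ContinuousWithinAt f (Ici 0) 0) : StieltjesFunction ℝ where
  -- vanishes on `(-∞, 0]` because `tangentIntercept f 0 = f 0`
  toFun t := f 0 - tangentIntercept f (max t 0)
  mono' _ _ hst := sub_le_sub_left (hf.antitoneOn_tangentIntercept
    (mem_Ici.2 (le_max_right _ _)) (mem_Ici.2 (le_max_right _ _)) (max_le_max_right 0 hst)) _
  right_continuous' x := continuousWithinAt_const.sub <|
    ContinuousWithinAt.comp (f := fun t ↦ max t 0)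
      (hf.continuousWithinAt_tangentIntercept hmono hcont (le_max_right x 0))
      (continuous_id.max continuous_const).continuousWithinAt
      fun t (ht : x ≤ t) ↦ show max x 0 ≤ max t 0 from max_le_max_right 0 ht

section polyaStieltjes

variable (hf : ConvexOn ℝ (Ici 0) f) (hmono : AntitoneOn f (Ici 0))
  (hcont : ContinuousWithinAt f (Ici 0) 0) (hlim : Tendsto f atTop (𝓝 0))
include hf hmono hcont

lemma polyaStieltjes_apply (t : ℝ) :
    hf.polyaStieltjes hmono hcont t = f 0 - tangentIntercept f (max t 0) := rfl

lemma tendsto_polyaStieltjes_atBot : Tendsto (hf.polyaStieltjes hmono hcont) atBot (𝓝 0) := by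
  refine tendsto_const_nhds.congr' ?_
  filter_upwards [eventually_le_atBot 0] with t ht
  simp [polyaStieltjes_apply, max_eq_right ht]

include hlim in
lemma tendsto_polyaStieltjes_atTop :
    Tendsto (hf.polyaStieltjes hmono hcont) atTop (𝓝 (f 0)) := by
  rw [← sub_zero (f 0)]
  refine ((hf.tendsto_tangentIntercept_atTop hmono hlim).const_sub (f 0)).congr' ?_
  filter_upwards [eventually_ge_atTop 0] with t ht
  simp [polyaStieltjes_apply, max_eq_left ht]

lemma polyaStieltjes_measure_Iic_zero : (hf.polyaStieltjes hmono hcont).measure (Iic 0) = 0 := by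
  rw [StieltjesFunction.measure_Iic _ (hf.tendsto_polyaStieltjes_atBot hmono hcont)]
  simp [polyaStieltjes_apply]

include hlim in
lemma polyaStieltjes_measure_Ioi (ht : 0 ≤ t) :
    (hf.polyaStieltjes hmono hcont).measure (Ioi t) = ENNReal.ofReal (tangentIntercept f t) := by
  rw [StieltjesFunction.measure_Ioi _ (hf.tendsto_polyaStieltjes_atTop hmono hcont hlim)]
  simp [polyaStieltjes_apply, max_eq_left ht]

include hlim in
lemma isFiniteMeasure_polyaStieltjes : IsFiniteMeasure (hf.polyaStieltjes hmono hcont).measure :=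
  StieltjesFunction.isFiniteMeasure _ (hf.tendsto_polyaStieltjes_atBot hmono hcont)
    (hf.tendsto_polyaStieltjes_atTop hmono hcont hlim)

include hlim in
lemma eq_integral_polyaStieltjes_measure (hx : 0 ≤ x) :
    f x = ∫ t, max (1 - x / t) 0 ∂(hf.polyaStieltjes hmono hcont).measure := by
  have := hf.isFiniteMeasure_polyaStieltjes hmono hcont hlim
  have hfx : 0 ≤ f x := hmono.le_of_tendsto_atTop hlim hx
  rcases hx.eq_or_lt with rfl | hx
  · simp [measureReal_def, hfx, StieltjesFunction.measure_univ _
      (hf.tendsto_polyaStieltjes_atBot hmono hcont)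
      (hf.tendsto_polyaStieltjes_atTop hmono hcont hlim)]
  set ν := (hf.polyaStieltjes hmono hcont).measure
  have hlint : ∫⁻ t, ENNReal.ofReal (max (1 - x / t) 0) ∂ν = ENNReal.ofReal (f x) := calc
    _ = ∫⁻ s in Ioi x, ENNReal.ofReal (x / s ^ 2) * ν (Ioi s) :=
      lintegral_ofReal_max_one_sub_div ν (hf.polyaStieltjes_measure_Iic_zero hmono hcont) hx
    _ = ∫⁻ s in Ioi x, ENNReal.ofReal (x / s ^ 2 * tangentIntercept f s) := by
      refine setLIntegral_congr_fun measurableSet_Ioi fun s (hs : x < s) ↦ ?_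
      rw [hf.polyaStieltjes_measure_Ioi hmono hcont hlim (hx.trans hs).le,
        ENNReal.ofReal_mul (by positivity)]
    _ = ENNReal.ofReal (f x) := by
      rw [← ofReal_integral_eq_lintegral_ofReal
        (hf.integrableOn_div_sq_mul_tangentIntercept hmono hlim hx),
        hf.integral_Ioi_div_sq_mul_tangentIntercept hmono hlim hx]
      filter_upwards [ae_restrict_mem measurableSet_Ioi] with s (hs : x < s)
      have := hf.tangentIntercept_nonneg hmono hlim (hx.trans hs).le
      positivity
  rw [integral_eq_lintegral_of_nonneg_ae (f := fun t ↦ max (1 - x / t) 0)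
    (ae_of_all _ fun t ↦ le_max_right _ _)
    (by fun_prop : Measurable fun t : ℝ ↦ max (1 - x / t) 0).aestronglyMeasurable, hlint,
    ENNReal.toReal_ofReal hfx]

end polyaStieltjes

end ConvexOn

namespace IsPosDef

lemma const_mul {φ : ℝ → ℝ} (hφ : IsPosDef φ) {a : ℝ} (ha : 0 ≤ a) :
    IsPosDef fun u ↦ a * φ u := by
  intro n x c
  have : ∑ j, ∑ k, c j * (starRingEnd ℂ) (c k) * ((a * φ (x j - x k) : ℝ) : ℂ) =
      a * ∑ j, ∑ k, c j * (starRingEnd ℂ) (c k) * (φ (x j - x k) : ℂ) := by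
    simp only [Finset.mul_sum, ofReal_mul]
    exact Finset.sum_congr rfl fun j _ ↦ Finset.sum_congr rfl fun k _ ↦ by ring
  rw [this]
  exact mul_nonneg (by exact_mod_cast ha) (hφ n x c)

lemma integral {α : Type*} [MeasurableSpace α] {μ : Measure α} {φ : α → ℝ → ℝ}
    (hφ : ∀ᵐ t ∂μ, IsPosDef (φ t)) (hint : ∀ u, Integrable (fun t ↦ φ t u) μ) :
    IsPosDef fun u ↦ ∫ t, φ t u ∂μ := by
  intro n x c
  have hint' : ∀ j k,
      Integrable (fun t ↦ c j * (starRingEnd ℂ) (c k) * (φ t (x j - x k) : ℂ)) μ :=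
    fun j k ↦ (hint _).ofReal.const_mul _
  have : ∑ j, ∑ k, c j * (starRingEnd ℂ) (c k) * (↑(∫ t, φ t (x j - x k) ∂μ) : ℂ) =
      ∫ t, ∑ j, ∑ k, c j * (starRingEnd ℂ) (c k) * (φ t (x j - x k) : ℂ) ∂μ := by
    rw [integral_finsetSum _ fun j _ ↦ integrable_finsetSum _ fun k _ ↦ hint' j k]
    refine Finset.sum_congr rfl fun j _ ↦ ?_
    rw [integral_finsetSum _ fun k _ ↦ hint' j k]
    refine Finset.sum_congr rfl fun k _ ↦ ?_
    rw [integral_const_mul, integral_complex_ofReal]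
  rw [this]
  exact integral_nonneg_of_ae (hφ.mono fun t ht ↦ ht n x c)

lemma of_eq_integral_mul {α : Type*} [MeasurableSpace α] {μ : Measure α} {φ : ℝ → ℝ}
    (h : ℝ → α → ℝ) (hint : ∀ a b, Integrable (fun s ↦ h a s * h b s) μ)
    (hφ : ∀ a b, φ (a - b) = ∫ s, h a s * h b s ∂μ) : IsPosDef φ := by
  intro n x c
  set F : α → ℂ := fun s ↦ ∑ j, c j * (h (x j) s : ℂ)
  have hint' : ∀ j k, Integrable
      (fun s ↦ c j * (starRingEnd ℂ) (c k) * ((h (x j) s * h (x k) s : ℝ) : ℂ)) μ :=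
    fun j k ↦ (hint _ _).ofReal.const_mul _
  have hF : ∀ s, F s * (starRingEnd ℂ) (F s) =
      ∑ j, ∑ k, c j * (starRingEnd ℂ) (c k) * ((h (x j) s * h (x k) s : ℝ) : ℂ) := by
    intro s
    simp only [F, map_sum, map_mul, conj_ofReal, Finset.sum_mul_sum, ofReal_mul]
    exact Finset.sum_congr rfl fun j _ ↦ Finset.sum_congr rfl fun k _ ↦ by ring
  have : ∑ j, ∑ k, c j * (starRingEnd ℂ) (c k) * (φ (x j - x k) : ℂ) =
      ∫ s, F s * (starRingEnd ℂ) (F s) ∂μ := by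
    simp only [hF]
    rw [integral_finsetSum _ fun j _ ↦ integrable_finsetSum _ fun k _ ↦ hint' j k]
    refine Finset.sum_congr rfl fun j _ ↦ ?_
    rw [integral_finsetSum _ fun k _ ↦ hint' j k]
    refine Finset.sum_congr rfl fun k _ ↦ ?_
    rw [integral_const_mul, integral_complex_ofReal, hφ]
  rw [this]
  exact integral_nonneg fun s ↦ by
    simpa only [Pi.zero_apply, mul_conj] using zero_le_real.2 (normSq_nonneg (F s))

end IsPosDef

lemma volume_real_Icc_add_inter_Icc_add (a b t : ℝ) :
    volume.real (Icc a (a + t) ∩ Icc b (b + t)) = max (t - |a - b|) 0 := by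
  rw [Icc_inter_Icc, Real.volume_real_Icc, min_add_add_right, ← max_sub_min_eq_abs']
  ring_nf

lemma isPosDef_triangle {t : ℝ} (ht : 0 < t) : IsPosDef fun u ↦ max (1 - |u| / t) 0 := by
  set h : ℝ → ℝ → ℝ := fun a ↦ (Icc a (a + t)).indicator 1
  have hprod : ∀ a b, (fun s ↦ h a s * h b s) = (Icc a (a + t) ∩ Icc b (b + t)).indicator 1 :=
    fun a b ↦ by rw [inter_indicator_one]; rfl
  have hgram : IsPosDef fun u ↦ t * max (1 - |u| / t) 0 := by
    refine IsPosDef.of_eq_integral_mul h (μ := volume) (fun a b ↦ ?_) fun a b ↦ ?_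
    · rw [hprod]
      exact (integrableOn_const ((measure_mono inter_subset_left).trans_lt
        measure_Icc_lt_top).ne).integrable_indicator (measurableSet_Icc.inter measurableSet_Icc)
    · rw [hprod, integral_indicator_one (measurableSet_Icc.inter measurableSet_Icc),
        volume_real_Icc_add_inter_Icc_add, mul_max_of_nonneg _ _ ht.le, mul_zero, mul_sub,
        mul_one, mul_div_cancel₀ _ ht.ne']
  simpa [inv_mul_cancel_left₀ ht.ne'] using hgram.const_mul (inv_nonneg.2 ht.le)

lemma isPosDef_integral_triangle (ν : Measure ℝ) [IsFiniteMeasure ν] (hν : ν (Iic 0) = 0) :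
    IsPosDef fun u ↦ ∫ t, max (1 - |u| / t) 0 ∂ν := by
  have hpos : ∀ᵐ t ∂ν, 0 < t :=
    (measure_eq_zero_iff_ae_notMem.1 hν).mono fun t ht ↦ not_le.1 ht
  refine IsPosDef.integral (hpos.mono fun t ht ↦ isPosDef_triangle ht) fun u ↦ ?_
  refine (integrable_const 1).mono'
    (by fun_prop : Measurable fun t : ℝ ↦ max (1 - |u| / t) 0).aestronglyMeasurable
    (hpos.mono fun t ht ↦ ?_)
  rw [Real.norm_of_nonneg (le_max_right _ _)]
  exact max_le (by linarith [div_nonneg (abs_nonneg u) ht.le]) zero_le_one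

theorem polya_criterion (f : ℝ → ℝ)
    (hf_cont : Continuous f) (hf_even : ∀ x, f (-x) = f x)
    (hf_convex : ConvexOn ℝ (Set.Ici 0) f)
    (hf_mono : AntitoneOn f (Set.Ici 0))
    (hf_lim : Filter.Tendsto f Filter.atTop (nhds 0)) :
    (∃ ν : Measure ℝ, IsFiniteMeasure ν ∧ ν (Set.Iic 0) = 0 ∧
      ∀ x, f x = ∫ t, max (1 - |x| / t) 0 ∂ν) ∧
    (∀ x, 0 ≤ f x) ∧ IsPosDef f := by
  have hcont : ContinuousWithinAt f (Ici 0) 0 := hf_cont.continuousWithinAt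
  set ν := (hf_convex.polyaStieltjes hf_mono hcont).measure
  have hfin : IsFiniteMeasure ν := hf_convex.isFiniteMeasure_polyaStieltjes hf_mono hcont hf_lim
  have hν : ν (Iic 0) = 0 := hf_convex.polyaStieltjes_measure_Iic_zero hf_mono hcont
  have hrep : ∀ x, f x = ∫ t, max (1 - |x| / t) 0 ∂ν := fun x ↦ by
    rw [← hf_convex.eq_integral_polyaStieltjes_measure hf_mono hcont hf_lim (abs_nonneg x)]
    rcases le_total 0 x with hx | hx
    · rw [abs_of_nonneg hx]
    · rw [abs_of_nonpos hx, hf_even]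
  refine ⟨⟨ν, hfin, hν, hrep⟩, fun x ↦ hrep x ▸ integral_nonneg fun t ↦ le_max_right _ _, ?_⟩
  rw [funext hrep]
  exact isPosDef_integral_triangle ν hν
end
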